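/- Let V be a finite set of n ≥ 3 nodes, let C_i* and C_j* be two disjoint ground-truth clusters, and let A_i ⊆ C_i* and A_j ⊆ C_j* be nonempty sets (the nodes of each cluster carrying a designated feature value α), with β = |A_i|/|A_j|. Draw a random subset S ⊆ V by Bernoulli sampling with rate p ∈ [0,1]. Fix ε with 0 < ε ≤ 1, and suppose p·|A_i| ≥ (12/ε²)·ln n and p·|A_j| ≥ (12/ε²)·ln n. Then with probability at least 1 − 4/n, one has A_j ∩ S ≠ ∅ and β·(1 − ε) ≤ |A_i ∩ S| / |A_j ∩ S| ≤ β·(1 + 2ε). -/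

import Mathlib

/-- The probability that the Bernoulli-`p` random subset of the finite type `V`
(each node included independently with probability `p`) equals `S`. -/
noncomputable def bernoulliWeight {V : Type*} [Fintype V] [DecidableEq V]
    (p : ℝ) (S : Finset V) : ℝ :=
  p ^ S.card * (1 - p) ^ (Fintype.card V - S.card)

open Classical in
/-- Probability of the event `A` under Bernoulli-`p` sampling of a subset of `V`. -/
noncomputable def prEvent {V : Type*} [Fintype V] [DecidableEq V]
    (p : ℝ) (A : Finset V → Prop) : ℝ :=
  ∑ S : Finset V, if A S then bernoulliWeight p S else 0

section Aux
variable {V : Type*} [Fintype V] [DecidableEq V] {p : ℝ}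

lemma mgf_eq (p : ℝ) (A : Finset V) (c d : ℝ) :
    ∑ S : Finset V, bernoulliWeight p S * ∏ v ∈ A, (if v ∈ S then c else d)
      = (p * c + (1 - p) * d) ^ A.card := by
  have key : ∀ S : Finset V, bernoulliWeight p S * ∏ v ∈ A, (if v ∈ S then c else d)
      = (∏ v ∈ S, (p * (if v ∈ A then c else 1))) *
        ∏ v ∈ Finset.univ \ S, ((1 - p) * (if v ∈ A then d else 1)) := by
    intro S
    have h1 : (Finset.univ \ S).card = Fintype.card V - S.card := by
      simp [Finset.card_univ_diff]
    have h2 : (Finset.univ \ S) ∩ A = A \ S := by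
      ext v; simp [Finset.mem_sdiff, Finset.mem_inter, and_comm]
    have f1 : A.filter (· ∈ S) = A ∩ S := by ext v; simp
    have f2 : A.filter (· ∉ S) = A \ S := by ext v; simp [Finset.mem_sdiff]
    have h3 : ∏ v ∈ A, (if v ∈ S then c else d)
        = c ^ (A ∩ S).card * d ^ (A \ S).card := by
      rw [Finset.prod_ite, f1, f2, Finset.prod_const, Finset.prod_const]
    rw [Finset.prod_mul_distrib, Finset.prod_mul_distrib, Finset.prod_const,
      Finset.prod_const, Finset.prod_ite_mem, Finset.prod_ite_mem, Finset.prod_const,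
      Finset.prod_const, h1, h2, h3, bernoulliWeight, Finset.inter_comm S A]
    ring
  simp_rw [key]
  rw [← Finset.powerset_univ, ← Finset.prod_add]
  have h5 : ∀ v ∈ (Finset.univ : Finset V),
      (p * (if v ∈ A then c else 1) + (1 - p) * (if v ∈ A then d else 1))
      = (if v ∈ A then p * c + (1 - p) * d else 1) := by
    intro v _; split_ifs <;> ring
  rw [Finset.prod_congr rfl h5, Finset.prod_ite_mem, Finset.univ_inter, Finset.prod_const]

lemma weight_nonneg (hp0 : 0 ≤ p) (hp1 : p ≤ 1) (S : Finset V) :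
    0 ≤ bernoulliWeight p S := by
  unfold bernoulliWeight
  have : (0:ℝ) ≤ 1 - p := by linarith
  positivity

lemma total_mass (p : ℝ) : ∑ S : Finset V, bernoulliWeight p S = 1 := by
  have h := mgf_eq (V := V) p ∅ 1 1
  simpa using h

lemma prEvent_le_mgf (hp0 : 0 ≤ p) (hp1 : p ≤ 1) (A : Finset V → Prop)
    (g : Finset V → ℝ) (hg : ∀ S, 0 ≤ g S) (h : ∀ S, A S → 1 ≤ g S) :
    prEvent p A ≤ ∑ S : Finset V, bernoulliWeight p S * g S := by
  unfold prEvent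
  apply Finset.sum_le_sum
  intro S _
  split_ifs with h'
  · exact le_mul_of_one_le_right (weight_nonneg hp0 hp1 S) (h S h')
  · exact mul_nonneg (weight_nonneg hp0 hp1 S) (hg S)

lemma prod_ite_exp (A S : Finset V) (t : ℝ) :
    (∏ v ∈ A, (if v ∈ S then Real.exp t else 1)) = Real.exp (t * ((A ∩ S).card : ℝ)) := by
  rw [Finset.prod_ite_mem, Finset.prod_const, mul_comm t, Real.exp_nat_mul]

lemma chernoff_upper (hp0 : 0 ≤ p) (hp1 : p ≤ 1) (A : Finset V) (t a : ℝ) (ht : 0 ≤ t) :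
    prEvent p (fun S => a ≤ ((A ∩ S).card : ℝ))
      ≤ Real.exp (p * A.card * (Real.exp t - 1) - t * a) := by
  have step1 : prEvent p (fun S => a ≤ ((A ∩ S).card : ℝ))
      ≤ ∑ S : Finset V, bernoulliWeight p S *
          (Real.exp (-(t * a)) * ∏ v ∈ A, (if v ∈ S then Real.exp t else 1)) := by
    apply prEvent_le_mgf hp0 hp1
    · intro S
      have : (0:ℝ) < ∏ v ∈ A, (if v ∈ S then Real.exp t else 1) := by
        apply Finset.prod_pos; intro v _; split_ifs
        · exact Real.exp_pos t
        · norm_num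
      positivity
    · intro S hS
      rw [prod_ite_exp, ← Real.exp_add]
      rw [show (1:ℝ) = Real.exp 0 from (Real.exp_zero).symm]
      apply Real.exp_le_exp.mpr
      nlinarith [mul_le_mul_of_nonneg_left hS ht]
  have step2 : ∑ S : Finset V, bernoulliWeight p S *
          (Real.exp (-(t * a)) * ∏ v ∈ A, (if v ∈ S then Real.exp t else 1))
      = Real.exp (-(t * a)) * (p * Real.exp t + (1 - p) * 1) ^ A.card := by
    rw [← mgf_eq p A (Real.exp t) 1, Finset.mul_sum]
    apply Finset.sum_congr rfl; intro S _; ring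
  have step3 : (p * Real.exp t + (1 - p) * 1) ^ A.card
      ≤ Real.exp (p * (Real.exp t - 1)) ^ A.card := by
    apply pow_le_pow_left₀
    · nlinarith [Real.exp_pos t]
    · have := Real.add_one_le_exp (p * (Real.exp t - 1))
      linarith
  calc prEvent p (fun S => a ≤ ((A ∩ S).card : ℝ))
      ≤ Real.exp (-(t * a)) * (p * Real.exp t + (1 - p) * 1) ^ A.card := by
        rw [← step2]; exact step1
    _ ≤ Real.exp (-(t * a)) * Real.exp (p * (Real.exp t - 1)) ^ A.card := by
        apply mul_le_mul_of_nonneg_left step3 (le_of_lt (Real.exp_pos _))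
    _ = Real.exp (p * A.card * (Real.exp t - 1) - t * a) := by
        rw [← Real.exp_nat_mul, ← Real.exp_add]; ring_nf

lemma chernoff_lower (hp0 : 0 ≤ p) (hp1 : p ≤ 1) (A : Finset V) (t a : ℝ) (ht : 0 ≤ t) :
    prEvent p (fun S => ((A ∩ S).card : ℝ) ≤ a)
      ≤ Real.exp (p * A.card * (Real.exp (-t) - 1) + t * a) := by
  have step1 : prEvent p (fun S => ((A ∩ S).card : ℝ) ≤ a)
      ≤ ∑ S : Finset V, bernoulliWeight p S *
          (Real.exp (t * a) * ∏ v ∈ A, (if v ∈ S then Real.exp (-t) else 1)) := by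
    apply prEvent_le_mgf hp0 hp1
    · intro S
      have : (0:ℝ) < ∏ v ∈ A, (if v ∈ S then Real.exp (-t) else 1) := by
        apply Finset.prod_pos; intro v _; split_ifs
        · exact Real.exp_pos _
        · norm_num
      positivity
    · intro S hS
      rw [prod_ite_exp, ← Real.exp_add]
      rw [show (1:ℝ) = Real.exp 0 from (Real.exp_zero).symm]
      apply Real.exp_le_exp.mpr
      nlinarith [mul_le_mul_of_nonneg_left hS ht]
  have step2 : ∑ S : Finset V, bernoulliWeight p S *
          (Real.exp (t * a) * ∏ v ∈ A, (if v ∈ S then Real.exp (-t) else 1))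
      = Real.exp (t * a) * (p * Real.exp (-t) + (1 - p) * 1) ^ A.card := by
    rw [← mgf_eq p A (Real.exp (-t)) 1, Finset.mul_sum]
    apply Finset.sum_congr rfl; intro S _; ring
  have step3 : (p * Real.exp (-t) + (1 - p) * 1) ^ A.card
      ≤ Real.exp (p * (Real.exp (-t) - 1)) ^ A.card := by
    apply pow_le_pow_left₀
    · nlinarith [Real.exp_pos (-t)]
    · have := Real.add_one_le_exp (p * (Real.exp (-t) - 1))
      linarith
  calc prEvent p (fun S => ((A ∩ S).card : ℝ) ≤ a)
      ≤ Real.exp (t * a) * (p * Real.exp (-t) + (1 - p) * 1) ^ A.card := by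
        rw [← step2]; exact step1
    _ ≤ Real.exp (t * a) * Real.exp (p * (Real.exp (-t) - 1)) ^ A.card := by
        apply mul_le_mul_of_nonneg_left step3 (le_of_lt (Real.exp_pos _))
    _ = Real.exp (p * A.card * (Real.exp (-t) - 1) + t * a) := by
        rw [← Real.exp_nat_mul, ← Real.exp_add]; ring_nf

lemma prEvent_mono (hp0 : 0 ≤ p) (hp1 : p ≤ 1) {A B : Finset V → Prop}
    (h : ∀ S, A S → B S) : prEvent p A ≤ prEvent p B := by
  unfold prEvent
  apply Finset.sum_le_sum
  intro S _
  split_ifs with h1 h2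
  · exact le_refl _
  · exact absurd (h S h1) h2
  · exact weight_nonneg hp0 hp1 S
  · exact le_refl _

lemma prEvent_union (hp0 : 0 ≤ p) (hp1 : p ≤ 1) (A B : Finset V → Prop) :
    prEvent p (fun S => A S ∨ B S) ≤ prEvent p A + prEvent p B := by
  unfold prEvent
  rw [← Finset.sum_add_distrib]
  apply Finset.sum_le_sum
  intro S _
  have hw := weight_nonneg (p := p) hp0 hp1 S
  split_ifs <;> first | linarith | tauto

lemma prEvent_compl (hp0 : 0 ≤ p) (hp1 : p ≤ 1) (A : Finset V → Prop) :
    prEvent p A + prEvent p (fun S => ¬ A S) = 1 := by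
  unfold prEvent
  rw [← Finset.sum_add_distrib, ← total_mass (V := V) p]
  apply Finset.sum_congr rfl
  intro S _
  split_ifs <;> simp_all

lemma exp_taylor3 (x : ℝ) (h : |x| ≤ 1) :
    Real.exp x ≤ 1 + x + x ^ 2 / 2 + |x| ^ 3 * (2 / 9) := by
  have hb := Real.exp_bound h (n := 3) (by norm_num)
  have hsum : ∑ m ∈ Finset.range 3, x ^ m / (m.factorial : ℝ) = 1 + x + x ^ 2 / 2 := by
    rw [Finset.sum_range_succ, Finset.sum_range_succ, Finset.sum_range_succ]
    norm_num [Nat.factorial]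
  rw [hsum] at hb
  have h1 := abs_le.mp hb
  have : ((3:ℕ).succ : ℝ) / ((3:ℕ).factorial * (3:ℕ)) = 2 / 9 := by
    norm_num [Nat.factorial]
  rw [this] at h1
  linarith [h1.2]

/-- Upper tail bound: `P(|A∩S| ≥ (1+ε/2)·p|A|) ≤ 1/n`. -/
lemma tail_up (n : ℕ) (hn3 : 3 ≤ n) (hp0 : 0 ≤ p) (hp1 : p ≤ 1)
    (ε : ℝ) (hε0 : 0 < ε) (hε1 : ε ≤ 1) (A : Finset V)
    (hpA : (12 / ε ^ 2) * Real.log n ≤ p * (A.card : ℝ)) :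
    prEvent p (fun S => (1 + ε / 2) * (p * (A.card : ℝ)) ≤ ((A ∩ S).card : ℝ))
      ≤ 1 / (n : ℝ) := by
  set δ : ℝ := ε / 2 with hδdef
  set μ : ℝ := p * (A.card : ℝ) with hμdef
  have hδ0 : 0 ≤ δ := by positivity
  have hδh : δ ≤ 1 / 2 := by rw [hδdef]; linarith
  have hlog : 0 < Real.log n := by
    apply Real.log_pos
    exact_mod_cast lt_of_lt_of_le (by norm_num) hn3
  have hμpos : 0 < μ := by
    have h12 : (0:ℝ) < 12 / ε ^ 2 := by positivity
    calc (0:ℝ) < (12 / ε ^ 2) * Real.log n := by positivity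
      _ ≤ μ := hpA
  have hexp : Real.exp δ ≤ 1 + δ + δ ^ 2 / 2 + δ ^ 3 * (2 / 9) := by
    have := exp_taylor3 δ (by rw [abs_of_nonneg hδ0]; linarith)
    rwa [abs_of_nonneg hδ0] at this
  have hkey : Real.exp δ - 1 - δ - δ ^ 2 ≤ -(ε ^ 2 / 12) := by
    have hδε : δ = ε / 2 := hδdef
    nlinarith [sq_nonneg δ, sq_nonneg ε, mul_nonneg hδ0 hδ0]
  have hEbound : μ * (Real.exp δ - 1) - δ * ((1 + δ) * μ) ≤ -Real.log n := by
    have h1 : μ * (Real.exp δ - 1) - δ * ((1 + δ) * μ)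
        = μ * (Real.exp δ - 1 - δ - δ ^ 2) := by ring
    have h2 : μ * (Real.exp δ - 1 - δ - δ ^ 2) ≤ μ * (-(ε ^ 2 / 12)) :=
      mul_le_mul_of_nonneg_left hkey (le_of_lt hμpos)
    have h3 : Real.log n ≤ (ε ^ 2 / 12) * μ := by
      nlinarith [mul_le_mul_of_nonneg_left hpA (le_of_lt (show (0:ℝ) < ε ^ 2 / 12 by positivity)),
        (show (ε ^ 2 / 12) * ((12 / ε ^ 2) * Real.log n) = Real.log n by field_simp)]
    linarith
  calc prEvent p (fun S => (1 + δ) * μ ≤ ((A ∩ S).card : ℝ))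
      ≤ Real.exp (p * A.card * (Real.exp δ - 1) - δ * ((1 + δ) * μ)) :=
        chernoff_upper hp0 hp1 A δ ((1 + δ) * μ) hδ0
    _ ≤ Real.exp (-Real.log n) := by
        apply Real.exp_le_exp.mpr
        rw [← hμdef]; exact hEbound
    _ = 1 / (n : ℝ) := by
        rw [Real.exp_neg, Real.exp_log (by exact_mod_cast lt_of_lt_of_le (by norm_num) hn3)]
        rw [one_div]

/-- Lower tail bound: `P(|A∩S| ≤ (1-ε/2)·p|A|) ≤ 1/n`. -/
lemma tail_low (n : ℕ) (hn3 : 3 ≤ n) (hp0 : 0 ≤ p) (hp1 : p ≤ 1)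
    (ε : ℝ) (hε0 : 0 < ε) (hε1 : ε ≤ 1) (A : Finset V)
    (hpA : (12 / ε ^ 2) * Real.log n ≤ p * (A.card : ℝ)) :
    prEvent p (fun S => ((A ∩ S).card : ℝ) ≤ (1 - ε / 2) * (p * (A.card : ℝ)))
      ≤ 1 / (n : ℝ) := by
  set δ : ℝ := ε / 2 with hδdef
  set μ : ℝ := p * (A.card : ℝ) with hμdef
  have hδ0 : 0 ≤ δ := by positivity
  have hδh : δ ≤ 1 / 2 := by rw [hδdef]; linarith
  have hlog : 0 < Real.log n := by
    apply Real.log_pos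
    exact_mod_cast lt_of_lt_of_le (by norm_num) hn3
  have hμpos : 0 < μ := by
    calc (0:ℝ) < (12 / ε ^ 2) * Real.log n := by positivity
      _ ≤ μ := hpA
  have hexp : Real.exp (-δ) ≤ 1 - δ + δ ^ 2 / 2 + δ ^ 3 * (2 / 9) := by
    have h := exp_taylor3 (-δ) (by rw [abs_of_nonpos (by linarith)]; linarith)
    have habs : |(-δ)| = δ := by rw [abs_of_nonpos (by linarith)]; ring
    rw [habs] at h
    nlinarith [h]
  have hkey : Real.exp (-δ) - 1 + δ - δ ^ 2 ≤ -(ε ^ 2 / 12) := by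
    nlinarith [sq_nonneg δ, mul_nonneg hδ0 hδ0]
  have hEbound : μ * (Real.exp (-δ) - 1) + δ * ((1 - δ) * μ) ≤ -Real.log n := by
    have h2 : μ * (Real.exp (-δ) - 1 + δ - δ ^ 2) ≤ μ * (-(ε ^ 2 / 12)) :=
      mul_le_mul_of_nonneg_left hkey (le_of_lt hμpos)
    have h3 : Real.log n ≤ (ε ^ 2 / 12) * μ := by
      nlinarith [mul_le_mul_of_nonneg_left hpA (le_of_lt (show (0:ℝ) < ε ^ 2 / 12 by positivity)),
        (show (ε ^ 2 / 12) * ((12 / ε ^ 2) * Real.log n) = Real.log n by field_simp)]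
    nlinarith
  calc prEvent p (fun S => ((A ∩ S).card : ℝ) ≤ (1 - δ) * μ)
      ≤ Real.exp (p * A.card * (Real.exp (-δ) - 1) + δ * ((1 - δ) * μ)) :=
        chernoff_lower hp0 hp1 A δ ((1 - δ) * μ) hδ0
    _ ≤ Real.exp (-Real.log n) := by
        apply Real.exp_le_exp.mpr
        rw [← hμdef]; exact hEbound
    _ = 1 / (n : ℝ) := by
        rw [Real.exp_neg, Real.exp_log (by exact_mod_cast lt_of_lt_of_le (by norm_num) hn3)]
        rw [one_div]

end Aux

set_option maxHeartbeats 1000000 in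
/-- Lemma 4, ω_EQ: for disjoint clusters `C_i*, C_j*` with nonempty
feature classes `A_i ⊆ C_i*`, `A_j ⊆ C_j*` and `β = |A_i|/|A_j|`, if
`p·|A_i| ≥ (12/ε²)·ln n` and `p·|A_j| ≥ (12/ε²)·ln n`, then with probability at
least `1 − 4/n` the sampled ratio `|A_i ∩ S|/|A_j ∩ S|` lies in `[β(1−ε), β(1+2ε)]`. -/
theorem stmt_6 {V : Type*} [Fintype V] [DecidableEq V]
    (n : ℕ) (hn : Fintype.card V = n) (hn3 : 3 ≤ n)
    (Ci Cj : Finset V) (hCdisj : Disjoint Ci Cj)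
    (Ai Aj : Finset V) (hAi : Ai.Nonempty) (hAj : Aj.Nonempty)
    (hAiC : Ai ⊆ Ci) (hAjC : Aj ⊆ Cj)
    (β : ℝ) (hβ : β = (Ai.card : ℝ) / (Aj.card : ℝ))
    (p : ℝ) (hp0 : 0 ≤ p) (hp1 : p ≤ 1)
    (ε : ℝ) (hε0 : 0 < ε) (hε1 : ε ≤ 1)
    (hpAi : (12 / ε ^ 2) * Real.log n ≤ p * (Ai.card : ℝ))
    (hpAj : (12 / ε ^ 2) * Real.log n ≤ p * (Aj.card : ℝ)) :
    1 - 4 / (n : ℝ) ≤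
      prEvent p (fun S => (Aj ∩ S).Nonempty ∧
        β * (1 - ε) ≤ ((Ai ∩ S).card : ℝ) / (((Aj ∩ S).card : ℝ)) ∧
        ((Ai ∩ S).card : ℝ) / (((Aj ∩ S).card : ℝ)) ≤ β * (1 + 2 * ε)) := by
  classical
  set δ : ℝ := ε / 2 with hδdef
  set μi : ℝ := p * (Ai.card : ℝ) with hμi
  set μj : ℝ := p * (Aj.card : ℝ) with hμj
  have hlog : 0 < Real.log n := by
    apply Real.log_pos
    exact_mod_cast lt_of_lt_of_le (by norm_num) hn3
  have hμipos : 0 < μi := lt_of_lt_of_le (by positivity) hpAi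
  have hμjpos : 0 < μj := lt_of_lt_of_le (by positivity) hpAj
  have hAjcard : (0:ℝ) < (Aj.card : ℝ) := by
    exact_mod_cast Finset.card_pos.mpr hAj
  have hβμ : β * μj = μi := by
    rw [hβ, hμj, hμi]; field_simp
  have hβ0 : 0 ≤ β := by
    rw [hβ]; positivity
  have hδ1 : δ ≤ 1 / 2 := by rw [hδdef]; linarith
  have hδ0 : 0 < δ := by rw [hδdef]; linarith
  have hpAi' : (12 / ε ^ 2) * Real.log n ≤ p * (Ai.card : ℝ) := by
    rw [← hμi]; exact hpAi
  have hpAj' : (12 / ε ^ 2) * Real.log n ≤ p * (Aj.card : ℝ) := by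
    rw [← hμj]; exact hpAj
  clear_value δ μi μj
  -- good configuration implies the event
  have himp : ∀ S : Finset V,
      ¬ (((1 + δ) * μi ≤ ((Ai ∩ S).card : ℝ)) ∨ (((Ai ∩ S).card : ℝ) ≤ (1 - δ) * μi) ∨
         ((1 + δ) * μj ≤ ((Aj ∩ S).card : ℝ)) ∨ (((Aj ∩ S).card : ℝ) ≤ (1 - δ) * μj)) →
      ((Aj ∩ S).Nonempty ∧
        β * (1 - ε) ≤ ((Ai ∩ S).card : ℝ) / (((Aj ∩ S).card : ℝ)) ∧
        ((Ai ∩ S).card : ℝ) / (((Aj ∩ S).card : ℝ)) ≤ β * (1 + 2 * ε)) := by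
    intro S hS
    push_neg at hS
    obtain ⟨h1, h2, h3, h4⟩ := hS
    have hy0 : (0:ℝ) < ((Aj ∩ S).card : ℝ) := by
      have hpos : (0:ℝ) < (1 - δ) * μj := mul_pos (by linarith) hμjpos
      linarith
    have hne : (Aj ∩ S).Nonempty := Finset.card_pos.mp (by exact_mod_cast hy0)
    refine ⟨hne, ?_, ?_⟩
    · rw [le_div_iff₀ hy0]
      have hb1 : β * (1 - ε) * ((Aj ∩ S).card : ℝ) ≤ β * (1 - ε) * ((1 + δ) * μj) := by
        apply mul_le_mul_of_nonneg_left (le_of_lt h3)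
        exact mul_nonneg hβ0 (by linarith)
      have hb2 : β * (1 - ε) * ((1 + δ) * μj) = (1 - ε) * (1 + δ) * μi := by
        rw [← hβμ]; ring
      have hb3 : (1 - ε) * (1 + δ) * μi ≤ (1 - δ) * μi := by
        apply mul_le_mul_of_nonneg_right _ (le_of_lt hμipos)
        rw [hδdef]; nlinarith
      linarith
    · rw [div_le_iff₀ hy0]
      have hb1 : ((Ai ∩ S).card : ℝ) ≤ (1 + δ) * μi := le_of_lt h1
      have hb2 : (1 + δ) * μi = β * ((1 + δ) * μj) := by rw [← hβμ]; ring
      have hb3 : β * ((1 + δ) * μj) ≤ β * ((1 + 2 * ε) * ((1 - δ) * μj)) := by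
        apply mul_le_mul_of_nonneg_left _ hβ0
        have hfac : (1 + δ) ≤ (1 + 2 * ε) * (1 - δ) := by
          rw [hδdef]; nlinarith
        have := mul_le_mul_of_nonneg_right hfac (le_of_lt hμjpos)
        linarith [this]
      have hb4 : β * ((1 + 2 * ε) * ((1 - δ) * μj)) ≤ β * (1 + 2 * ε) * ((Aj ∩ S).card : ℝ) := by
        have h5 : (1 - δ) * μj ≤ ((Aj ∩ S).card : ℝ) := le_of_lt h4
        have h6 : 0 ≤ β * (1 + 2 * ε) := mul_nonneg hβ0 (by linarith)
        have := mul_le_mul_of_nonneg_left h5 h6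
        linarith [this]
      linarith
  -- tail bounds
  have hB1 : prEvent p (fun S => (1 + δ) * μi ≤ ((Ai ∩ S).card : ℝ)) ≤ 1 / (n : ℝ) := by
    have h := tail_up n hn3 hp0 hp1 ε hε0 hε1 Ai hpAi'
    simpa only [← hδdef, ← hμi] using h
  have hB2 : prEvent p (fun S => ((Ai ∩ S).card : ℝ) ≤ (1 - δ) * μi) ≤ 1 / (n : ℝ) := by
    have h := tail_low n hn3 hp0 hp1 ε hε0 hε1 Ai hpAi'
    simpa only [← hδdef, ← hμi] using h
  have hB3 : prEvent p (fun S => (1 + δ) * μj ≤ ((Aj ∩ S).card : ℝ)) ≤ 1 / (n : ℝ) := by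
    have h := tail_up n hn3 hp0 hp1 ε hε0 hε1 Aj hpAj'
    simpa only [← hδdef, ← hμj] using h
  have hB4 : prEvent p (fun S => ((Aj ∩ S).card : ℝ) ≤ (1 - δ) * μj) ≤ 1 / (n : ℝ) := by
    have h := tail_low n hn3 hp0 hp1 ε hε0 hε1 Aj hpAj'
    simpa only [← hδdef, ← hμj] using h
  -- union bound
  have hBadle : prEvent p (fun S =>
      ((1 + δ) * μi ≤ ((Ai ∩ S).card : ℝ)) ∨ (((Ai ∩ S).card : ℝ) ≤ (1 - δ) * μi) ∨
      ((1 + δ) * μj ≤ ((Aj ∩ S).card : ℝ)) ∨ (((Aj ∩ S).card : ℝ) ≤ (1 - δ) * μj))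
      ≤ 4 / (n : ℝ) := by
    have u1 := prEvent_union hp0 hp1 (fun S => (1 + δ) * μi ≤ ((Ai ∩ S).card : ℝ))
      (fun S => (((Ai ∩ S).card : ℝ) ≤ (1 - δ) * μi) ∨
        ((1 + δ) * μj ≤ ((Aj ∩ S).card : ℝ)) ∨ (((Aj ∩ S).card : ℝ) ≤ (1 - δ) * μj))
    have u2 := prEvent_union hp0 hp1 (fun S => ((Ai ∩ S).card : ℝ) ≤ (1 - δ) * μi)
      (fun S => ((1 + δ) * μj ≤ ((Aj ∩ S).card : ℝ)) ∨ (((Aj ∩ S).card : ℝ) ≤ (1 - δ) * μj))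
    have u3 := prEvent_union hp0 hp1 (fun S => (1 + δ) * μj ≤ ((Aj ∩ S).card : ℝ))
      (fun S => ((Aj ∩ S).card : ℝ) ≤ (1 - δ) * μj)
    have h4n : (4:ℝ) / (n:ℝ) = 1/(n:ℝ) + (1/(n:ℝ) + (1/(n:ℝ) + 1/(n:ℝ))) := by ring
    linarith
  have hcompl := prEvent_compl hp0 hp1 (fun S =>
      ((1 + δ) * μi ≤ ((Ai ∩ S).card : ℝ)) ∨ (((Ai ∩ S).card : ℝ) ≤ (1 - δ) * μi) ∨
      ((1 + δ) * μj ≤ ((Aj ∩ S).card : ℝ)) ∨ (((Aj ∩ S).card : ℝ) ≤ (1 - δ) * μj))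
  have hmono : prEvent p (fun S => ¬ (((1 + δ) * μi ≤ ((Ai ∩ S).card : ℝ)) ∨
        (((Ai ∩ S).card : ℝ) ≤ (1 - δ) * μi) ∨
        ((1 + δ) * μj ≤ ((Aj ∩ S).card : ℝ)) ∨ (((Aj ∩ S).card : ℝ) ≤ (1 - δ) * μj)))
      ≤ prEvent p (fun S => (Aj ∩ S).Nonempty ∧
        β * (1 - ε) ≤ ((Ai ∩ S).card : ℝ) / (((Aj ∩ S).card : ℝ)) ∧
        ((Ai ∩ S).card : ℝ) / (((Aj ∩ S).card : ℝ)) ≤ β * (1 + 2 * ε)) :=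
    prEvent_mono hp0 hp1 himp
  linarith
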